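/- Let X ~ N(m, σ²) with σ > 0, and set α = m/σ. Then E[(max(X, 0))²] = (m² + σ²)·Φ(α) + mσ·φ(α), where φ and Φ are the standard normal pdf and cdf. -/

import Mathlib

open MeasureTheory ProbabilityTheory

noncomputable def stdNormalPhi : ℝ → ℝ := fun x => cdf (gaussianReal 0 1) x

noncomputable def stdNormalPdf : ℝ → ℝ :=
  fun x => (Real.sqrt (2 * Real.pi))⁻¹ * Real.exp (-x ^ 2 / 2)

/-!
Writing `X = σ Z + m` with `Z` standard normal, `max(X, 0)² = (σ Z + m)² 𝟙{Z > -α}`, so the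
expectation is `∫_{-α}^∞ (σ z + m)² φ(z) dz`. Since `φ' = -z φ`, the function
`-(σ² z + 2 σ m) φ(z)` is an antiderivative of `(σ z + m)² φ(z) - (m² + σ²) φ(z)`; evaluating it
at `-α` gives the `m σ φ(α)` term, and `∫_{-α}^∞ φ = Φ(α)` by symmetry of `φ`.
-/

open Real Set Filter Topology

lemma gaussianPDFReal_zero_one : gaussianPDFReal 0 1 = stdNormalPdf := by
  funext x
  simp [gaussianPDFReal, stdNormalPdf]

lemma stdNormalPdf_eq_mul_exp :
    stdNormalPdf = fun z => (√(2 * π))⁻¹ * rexp (-(1 / 2) * z ^ 2) := by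
  funext z
  simp only [stdNormalPdf]
  congr 2
  ring

lemma stdNormalPdf_neg (x : ℝ) : stdNormalPdf (-x) = stdNormalPdf x := by
  simp [stdNormalPdf]

lemma hasDerivAt_stdNormalPdf (z : ℝ) :
    HasDerivAt stdNormalPdf (-z * stdNormalPdf z) z := by
  have hexp : HasDerivAt (fun x : ℝ => -x ^ 2 / 2) (-z) z := by
    exact ((hasDerivAt_pow 2 z).neg.div_const 2).congr_deriv (by ring)
  unfold stdNormalPdf
  exact (hexp.exp.const_mul (√(2 * π))⁻¹).congr_deriv (by ring)

lemma integrable_pow_mul_stdNormalPdf (n : ℕ) :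
    Integrable (fun z : ℝ => z ^ n * stdNormalPdf z) := by
  have h := (integrable_rpow_mul_exp_neg_mul_sq (b := 1 / 2) (by norm_num)
    (neg_one_lt_zero.trans_le (Nat.cast_nonneg n))).const_mul (√(2 * π))⁻¹
  refine h.congr (Eventually.of_forall fun z => ?_)
  simp only [stdNormalPdf_eq_mul_exp, rpow_natCast]
  ring

lemma tendsto_pow_mul_stdNormalPdf_atTop (n : ℕ) :
    Tendsto (fun z : ℝ => z ^ n * stdNormalPdf z) atTop (𝓝 0) := by
  have hexp : Tendsto (fun x : ℝ => rexp (-(1 / 2) * x)) atTop (𝓝 0) :=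
    tendsto_exp_atBot.comp (tendsto_id.const_mul_atTop_of_neg (by norm_num))
  have h := ((rpow_mul_exp_neg_mul_sq_isLittleO_exp_neg (b := 1 / 2) (by norm_num) n).trans_tendsto
    hexp).const_mul (√(2 * π))⁻¹
  rw [mul_zero] at h
  refine h.congr fun z => ?_
  simp only [stdNormalPdf_eq_mul_exp, rpow_natCast]
  ring

lemma stdNormalPhi_eq_integral_Ioi_neg (a : ℝ) :
    stdNormalPhi a = ∫ z in Ioi (-a), stdNormalPdf z := by
  have hIic : stdNormalPhi a = ∫ z in Iic a, stdNormalPdf z := by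
    rw [stdNormalPhi, cdf_eq_real, measureReal_def,
      gaussianReal_apply_eq_integral 0 one_ne_zero,
      ENNReal.toReal_ofReal (integral_nonneg fun x => gaussianPDFReal_nonneg 0 1 x),
      gaussianPDFReal_zero_one]
  rw [hIic, ← integral_comp_neg_Iic]
  simp only [stdNormalPdf_neg]

lemma integral_Ioi_sq_affine_mul_stdNormalPdf (σ m a : ℝ) :
    ∫ z in Ioi a, (σ * z + m) ^ 2 * stdNormalPdf z
      = (σ ^ 2 * a + 2 * σ * m) * stdNormalPdf a
        + (σ ^ 2 + m ^ 2) * ∫ z in Ioi a, stdNormalPdf z := by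
  have hint₀ : Integrable stdNormalPdf := by
    simpa using integrable_pow_mul_stdNormalPdf 0
  have hint₂ : Integrable (fun z => (σ * z + m) ^ 2 * stdNormalPdf z) := by
    refine ((((integrable_pow_mul_stdNormalPdf 2).const_mul (σ ^ 2)).add
      ((integrable_pow_mul_stdNormalPdf 1).const_mul (2 * σ * m))).add
        (hint₀.const_mul (m ^ 2))).congr (Eventually.of_forall fun z => ?_)
    simp only [Pi.add_apply]
    ring
  have hderiv : ∀ z ∈ Ici a, HasDerivAt (fun z => -((σ ^ 2 * z + 2 * σ * m) * stdNormalPdf z))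
      ((σ * z + m) ^ 2 * stdNormalPdf z - (σ ^ 2 + m ^ 2) * stdNormalPdf z) z := by
    intro z _
    exact ((((hasDerivAt_id z).const_mul (σ ^ 2)).add_const (2 * σ * m)).mul
      (hasDerivAt_stdNormalPdf z)).neg.congr_deriv (by simp only [id_eq]; ring)
  have htendsto : Tendsto (fun z => -((σ ^ 2 * z + 2 * σ * m) * stdNormalPdf z)) atTop (𝓝 0) := by
    have h := (((tendsto_pow_mul_stdNormalPdf_atTop 1).const_mul (σ ^ 2)).add
      ((tendsto_pow_mul_stdNormalPdf_atTop 0).const_mul (2 * σ * m))).neg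
    simp only [mul_zero, add_zero, neg_zero] at h
    refine h.congr fun z => ?_
    ring
  have hFTC := integral_Ioi_of_hasDerivAt_of_tendsto' hderiv
    (hint₂.sub (hint₀.const_mul _)).integrableOn htendsto
  rw [integral_sub hint₂.integrableOn (hint₀.const_mul _).integrableOn,
    integral_const_mul] at hFTC
  linarith

lemma gaussianReal_eq_map_affine (m σ : ℝ) :
    gaussianReal m (⟨σ ^ 2, sq_nonneg σ⟩ : NNReal)
      = (gaussianReal 0 1).map (fun z => σ * z + m) := by
  have hcomp : (fun z : ℝ => σ * z + m) = (· + m) ∘ (σ * ·) := rfl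
  rw [hcomp, ← Measure.map_map (by fun_prop) (by fun_prop), gaussianReal_map_const_mul,
    gaussianReal_map_add_const, mul_zero, zero_add, mul_one]
  rfl

lemma integral_gaussianReal_zero_one (f : ℝ → ℝ) :
    ∫ z, f z ∂(gaussianReal 0 1) = ∫ z, f z * stdNormalPdf z := by
  simp only [integral_gaussianReal_eq_integral_smul one_ne_zero, gaussianPDFReal_zero_one,
    smul_eq_mul, mul_comm]

theorem stmt_11 (m : ℝ) (σ : ℝ) (hσ : 0 < σ) :
    ∫ x, (max x 0) ^ 2 ∂(gaussianReal m (⟨σ ^ 2, sq_nonneg σ⟩ : NNReal))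
      = (m ^ 2 + σ ^ 2) * stdNormalPhi (m / σ) + m * σ * stdNormalPdf (m / σ) := by
  have hpos (z : ℝ) : -(m / σ) < z ↔ 0 < σ * z + m := by
    rw [neg_lt, ← sub_pos, ← mul_pos_iff_of_pos_left hσ, mul_sub, mul_div_cancel₀ _ hσ.ne']
    constructor <;> intro h <;> linarith
  have hindicator : (fun z => max (σ * z + m) 0 ^ 2 * stdNormalPdf z)
      = (Ioi (-(m / σ))).indicator (fun z => (σ * z + m) ^ 2 * stdNormalPdf z) := by
    funext z
    by_cases hz : -(m / σ) < z
    · simp [hz, ((hpos z).1 hz).le]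
    · simp [hz, not_lt.1 ((hpos z).not.1 hz)]
  rw [gaussianReal_eq_map_affine, integral_map (by fun_prop) (by fun_prop),
    integral_gaussianReal_zero_one, hindicator, integral_indicator measurableSet_Ioi,
    integral_Ioi_sq_affine_mul_stdNormalPdf, ← stdNormalPhi_eq_integral_Ioi_neg, stdNormalPdf_neg]
  field_simp
  ring
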